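/- Let M be a compact, connected Riemannian manifold without boundary and let (X_t)_t be a continuous flow on M with at most finitely many equilibrium points, with periodic points dense in M, transitive, and such that for every T > 0 the set of periodic orbits of period smaller than T consists of finitely many disjoint closed curves. Let (Y_s)_s be a continuous flow commuting with (X_t)_t. Then for every x ∈ M and every s ∈ ℝ, the point Y_s(x) belongs to the orbit {X_t(x) : t ∈ ℝ} of x under (X_t)_t. -/

import Mathlib

open Set Filter Topology Metric

noncomputable section

variable {M : Type*} [MetricSpace M]

/-- A (global, jointly continuous) flow on `M`. -/
def IsFlow (φ : ℝ → M → M) : Prop :=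
  Continuous (fun p : ℝ × M => φ p.1 p.2) ∧ (∀ x, φ 0 x = x) ∧
    ∀ s t x, φ (s + t) x = φ s (φ t x)

/-- Two flows commute: `Y_s ∘ X_t = X_t ∘ Y_s` for all `s, t`. -/
def FlowsCommute (φ ψ : ℝ → M → M) : Prop :=
  ∀ (s t : ℝ) (x : M), ψ s (φ t x) = φ t (ψ s x)

/-- The orbit of a point under a flow. -/
def flowOrbit (φ : ℝ → M → M) (p : M) : Set M := range fun t => φ t p

/-- An equilibrium point of a flow. -/
def IsEquilibrium (φ : ℝ → M → M) (p : M) : Prop := ∀ t, φ t p = p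

/-- A periodic (non-equilibrium) point of a flow. -/
def IsPeriodicPoint (φ : ℝ → M → M) (p : M) : Prop :=
  (∃ T > 0, φ T p = p) ∧ ¬ IsEquilibrium φ p

/-- The flow is (topologically) transitive: some point has dense forward orbit. -/
def IsTransitiveFlow (φ : ℝ → M → M) : Prop :=
  ∃ x : M, Dense {y | ∃ t : ℝ, 0 ≤ t ∧ φ t x = y}

/-- For every `T > 0`, the set of periodic orbits of period smaller than `T` consists of
finitely many (disjoint) closed curves, i.e. of finitely many periodic orbits. -/
def FinitelyManyShortPeriodicOrbits (φ : ℝ → M → M) : Prop :=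
  ∀ T : ℝ, 0 < T → ∃ F : Set M, F.Finite ∧
    ∀ p : M, IsPeriodicPoint φ p → (∃ s : ℝ, 0 < s ∧ s < T ∧ φ s p = p) →
      ∃ q ∈ F, flowOrbit φ p = flowOrbit φ q

/-!
A commuting flow `ψ` that preserves a periodic orbit `≅ ℝ ⧸ Tℤ` of `φ` acts on it through a
continuous homomorphism `ℝ → ℝ ⧸ Tℤ`, which lifts to a linear map: `ψ_u p = φ_{c u} p`. It does
preserve the orbit, since `u ↦ ψ_u p` is a connected family of `T`-periodic points and these lie
on finitely many disjoint closed orbits. At a non-equilibrium point `x₀` the speeds `c` of nearby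
periodic points stay bounded (if `c → ∞` then `φ_a x₀ = lim ψ_{a/c} p = x₀`), so a limit speed
gives `ψ_s x₀ = φ_{c s} x₀`. When the orbit of `x₀` is dense, commutation and continuity spread
this to `ψ_s = φ_{c s}` on all of `M`.
-/

theorem AddCircle.exists_eq_coe_mul_of_continuous {T : ℝ} (f : ℝ →+ AddCircle T)
    (hf : Continuous f) : ∃ c : ℝ, ∀ u, f u = ((c * u : ℝ) : AddCircle T) := by
  have hcov := AddCircle.isCoveringMap_coe T
  obtain ⟨L, ⟨hL0, hLf⟩, -⟩ := hcov.existsUnique_continuousMap_lifts ⟨f, hf⟩ 0 0 (by simp)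
  have hLf' (u : ℝ) : (L u : AddCircle T) = f u := congrFun hLf u
  -- `u ↦ L (u + v)` and `u ↦ L u + L v` lift the same map and agree at `0`.
  have hL_add (u v : ℝ) : L (u + v) = L u + L v := by
    obtain ⟨L', -, huniq⟩ := hcov.existsUnique_continuousMap_lifts
      ⟨fun u => f (u + v), hf.comp (continuous_add_const v)⟩ 0 (L v) (by simp [hLf'])
    have h₁ := huniq (L.comp (ContinuousMap.addRight v)) ⟨by simp, funext fun u => by simp [hLf']⟩
    have h₂ := huniq (L + ContinuousMap.const ℝ (L v))
      ⟨by simp [hL0], funext fun u => by simp [hLf', map_add]⟩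
    exact congrFun (congrArg DFunLike.coe (h₁.trans h₂.symm)) u
  refine ⟨L 1, fun u => ?_⟩
  have hL_lin := map_real_smul (AddMonoidHom.mk' L hL_add) L.continuous u 1
  simp only [AddMonoidHom.mk'_apply, smul_eq_mul, mul_one] at hL_lin
  rw [← hLf', hL_lin, mul_comm]

namespace IsFlow

variable {φ : ℝ → M → M}

theorem continuous_orbit (hφ : IsFlow φ) (x : M) : Continuous fun t => φ t x :=
  hφ.1.comp (continuous_id.prodMk continuous_const)

theorem continuous_apply (hφ : IsFlow φ) (t : ℝ) : Continuous (φ t) :=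
  hφ.1.comp (continuous_const.prodMk continuous_id)

theorem map_zero_apply (hφ : IsFlow φ) (x : M) : φ 0 x = x := hφ.2.1 x

theorem map_add (hφ : IsFlow φ) (s t : ℝ) (x : M) : φ (s + t) x = φ s (φ t x) := hφ.2.2 s t x

theorem apply_neg_apply (hφ : IsFlow φ) (t : ℝ) (x : M) : φ (-t) (φ t x) = x := by
  rw [← hφ.map_add, neg_add_cancel, hφ.map_zero_apply]

theorem mem_flowOrbit_self (hφ : IsFlow φ) (x : M) : x ∈ flowOrbit φ x :=
  ⟨0, hφ.map_zero_apply x⟩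

theorem flowOrbit_eq_of_mem (hφ : IsFlow φ) {x y : M} (h : y ∈ flowOrbit φ x) :
    flowOrbit φ y = flowOrbit φ x := by
  obtain ⟨s, rfl⟩ := h
  ext z
  constructor
  · rintro ⟨t, rfl⟩
    exact ⟨t + s, hφ.map_add t s x⟩
  · rintro ⟨t, rfl⟩
    exact ⟨t - s, by simp only [← hφ.map_add, sub_add_cancel]⟩

theorem periodic_orbit (hφ : IsFlow φ) {T : ℝ} {p : M} (hT : φ T p = p) :
    Function.Periodic (fun t => φ t p) T := fun t => by
  simp only [hφ.map_add, hT]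

theorem isCompact_flowOrbit (hφ : IsFlow φ) {T : ℝ} {p : M} (hT0 : 0 < T) (hT : φ T p = p) :
    IsCompact (flowOrbit φ p) := by
  rw [flowOrbit, ← (hφ.periodic_orbit hT).image_Icc hT0 0]
  exact isCompact_Icc.image (hφ.continuous_orbit p)

def periods (hφ : IsFlow φ) (p : M) : AddSubgroup ℝ where
  carrier := {t | φ t p = p}
  add_mem' {s t} (hs : φ s p = p) (ht : φ t p = p) := show φ (s + t) p = p by
    rw [hφ.map_add, ht, hs]
  zero_mem' := hφ.map_zero_apply p
  neg_mem' {t} (ht : φ t p = p) := show φ (-t) p = p by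
    conv_lhs => rw [← ht]
    exact hφ.apply_neg_apply t p

theorem mem_periods (hφ : IsFlow φ) {p : M} {t : ℝ} : t ∈ hφ.periods p ↔ φ t p = p := Iff.rfl

theorem apply_eq_apply_iff (hφ : IsFlow φ) {p : M} {s t : ℝ} :
    φ s p = φ t p ↔ -s + t ∈ hφ.periods p := by
  rw [mem_periods, hφ.map_add]
  constructor
  · intro h
    rw [← h, hφ.apply_neg_apply]
  · intro h
    conv_lhs => rw [← h]
    rw [← hφ.map_add, add_neg_cancel, hφ.map_zero_apply]

theorem exists_periods_eq_zmultiples (hφ : IsFlow φ) {p : M} (hp : IsPeriodicPoint φ p) :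
    ∃ T > 0, hφ.periods p = AddSubgroup.zmultiples T := by
  obtain ⟨⟨T, hT0, hT⟩, hne⟩ := hp
  rcases (hφ.periods p).dense_or_cyclic with hd | ⟨a, ha⟩
  · have hclosed : IsClosed (hφ.periods p : Set ℝ) :=
      isClosed_eq (hφ.continuous_orbit p) continuous_const
    refine absurd (fun t => ?_) hne
    rw [← mem_periods hφ, ← SetLike.mem_coe, ← hclosed.closure_eq, hd.closure_eq]
    exact mem_univ t
  · rw [← AddSubgroup.zmultiples_eq_closure] at ha
    have ha0 : a ≠ 0 := by
      rintro rfl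
      have hT_mem : T ∈ hφ.periods p := hT
      rw [ha, AddSubgroup.zmultiples_zero_eq_bot, AddSubgroup.mem_bot] at hT_mem
      exact hT0.ne' hT_mem
    refine ⟨|a|, abs_pos.2 ha0, ?_⟩
    rcases abs_choice a with h | h <;> rw [h, ha]
    exact AddSubgroup.zmultiples_neg.symm

theorem continuous_periodic_lift (hφ : IsFlow φ) {T : ℝ} {p : M}
    (h : Function.Periodic (fun t => φ t p) T) : Continuous h.lift :=
  (hφ.continuous_orbit p).quotient_liftOn' _

theorem injective_periodic_lift (hφ : IsFlow φ) {T : ℝ} {p : M}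
    (hT : hφ.periods p = AddSubgroup.zmultiples T) (h : Function.Periodic (fun t => φ t p) T) :
    Function.Injective h.lift := by
  rintro ⟨s⟩ ⟨t⟩ hst
  exact QuotientAddGroup.eq.2 (hT ▸ hφ.apply_eq_apply_iff.1 hst)

end IsFlow

section CommutingFlow

variable {φ ψ : ℝ → M → M}

theorem FlowsCommute.isPeriodicPoint_apply (hcomm : FlowsCommute φ ψ) (hψ : IsFlow ψ) {p : M}
    (hp : IsPeriodicPoint φ p) (u : ℝ) : IsPeriodicPoint φ (ψ u p) := by
  obtain ⟨⟨T, hT0, hT⟩, hne⟩ := hp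
  refine ⟨⟨T, hT0, by rw [← hcomm, hT]⟩, fun hE => hne fun t => ?_⟩
  calc φ t p = ψ (-u) (φ t (ψ u p)) := by rw [hcomm, hψ.apply_neg_apply]
    _ = p := by rw [hE t, hψ.apply_neg_apply]

theorem IsPreconnected.subset_flowOrbit (hφ : IsFlow φ) (h4 : FinitelyManyShortPeriodicOrbits φ)
    {S : Set M} (hS : IsPreconnected S) {T : ℝ} (hT0 : 0 < T)
    (hS_per : ∀ q ∈ S, IsPeriodicPoint φ q) (hS_T : ∀ q ∈ S, φ T q = q) {p : M} (hp : p ∈ S) :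
    S ⊆ flowOrbit φ p := by
  obtain ⟨F, hF, hF_orbit⟩ := h4 (T + 1) (by linarith)
  set O := flowOrbit φ p
  set G := {q ∈ F | IsCompact (flowOrbit φ q) ∧ flowOrbit φ q ≠ O}
  have hO : IsClosed O := (hφ.isCompact_flowOrbit hT0 (hS_T p hp)).isClosed
  have hK : IsClosed (⋃ q ∈ G, flowOrbit φ q) :=
    ((hF.subset (sep_subset _ _)).isCompact_biUnion fun q hq => hq.2.1).isClosed
  have hcover : S ⊆ O ∪ ⋃ q ∈ G, flowOrbit φ q := by
    intro q hq
    obtain ⟨r, hrF, hqr⟩ := hF_orbit q (hS_per q hq) ⟨T, hT0, by linarith, hS_T q hq⟩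
    have hq_mem : q ∈ flowOrbit φ r := hqr ▸ hφ.mem_flowOrbit_self q
    by_cases hrO : flowOrbit φ r = O
    · exact Or.inl (hrO ▸ hq_mem)
    · exact Or.inr (mem_biUnion ⟨hrF, hqr ▸ hφ.isCompact_flowOrbit hT0 (hS_T q hq), hrO⟩ hq_mem)
  have hdisj : S ∩ (O ∩ ⋃ q ∈ G, flowOrbit φ q) = ∅ := by
    refine eq_empty_of_forall_notMem fun z ⟨_, hzO, hzK⟩ => ?_
    obtain ⟨r, hr, hzr⟩ := mem_iUnion₂.1 hzK
    exact hr.2.2 ((hφ.flowOrbit_eq_of_mem hzr).symm.trans (hφ.flowOrbit_eq_of_mem hzO))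
  refine (isPreconnected_iff_subset_of_disjoint_closed.1 hS _ _ hO hK hcover hdisj).resolve_right
    fun hSK => ?_
  exact hdisj.subset ⟨hp, hφ.mem_flowOrbit_self p, hSK hp⟩

theorem FlowsCommute.apply_mem_flowOrbit (hcomm : FlowsCommute φ ψ) (hφ : IsFlow φ)
    (hψ : IsFlow ψ) (h4 : FinitelyManyShortPeriodicOrbits φ) {p : M} (hp : IsPeriodicPoint φ p)
    (u : ℝ) : ψ u p ∈ flowOrbit φ p := by
  obtain ⟨T, hT0, hT⟩ := hp.1
  refine (isPreconnected_range (hψ.continuous_orbit p)).subset_flowOrbit hφ h4 hT0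
    (forall_mem_range.2 (hcomm.isPeriodicPoint_apply hψ hp))
    (forall_mem_range.2 fun v => by rw [← hcomm, hT]) ⟨0, hψ.map_zero_apply p⟩ ⟨u, rfl⟩

def HasSpeedAt {X : Type*} (φ ψ : ℝ → X → X) (c : ℝ) (p : X) : Prop := ∀ u, ψ u p = φ (c * u) p

/-- Through the homeomorphism `AddCircle T ≃ flowOrbit φ p`, `t ↦ φ t p`, the map `u ↦ ψ u p`
becomes a continuous homomorphism `ℝ → AddCircle T` (by commutation), hence a rotation. -/
theorem FlowsCommute.exists_hasSpeedAt (hcomm : FlowsCommute φ ψ) (hφ : IsFlow φ) (hψ : IsFlow ψ)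
    {p : M} (hp : IsPeriodicPoint φ p) (hmem : ∀ u, ψ u p ∈ flowOrbit φ p) :
    ∃ c, HasSpeedAt φ ψ c p := by
  obtain ⟨T, hT0, hT⟩ := hφ.exists_periods_eq_zmultiples hp
  have : Fact (0 < T) := ⟨hT0⟩
  have hper := hφ.periodic_orbit (show T ∈ hφ.periods p from hT ▸ AddSubgroup.mem_zmultiples T)
  have he : IsClosedEmbedding hper.lift :=
    (hφ.continuous_periodic_lift hper).isClosedEmbedding (hφ.injective_periodic_lift hT hper)
  choose τ hτ using hmem
  replace hτ (u : ℝ) : φ (τ u) p = ψ u p := hτ u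
  have hτ_cont : Continuous fun u => (τ u : AddCircle T) := by
    rw [he.continuous_iff, Function.comp_def]
    simpa only [hper.lift_coe, hτ] using hψ.continuous_orbit p
  have hτ_add (u v : ℝ) : (τ (u + v) : AddCircle T) = τ u + τ v := by
    refine he.injective ?_
    rw [← QuotientAddGroup.mk_add, hper.lift_coe, hper.lift_coe]
    calc φ (τ (u + v)) p = ψ u (φ (τ v) p) := by rw [hτ, hψ.map_add, hτ v]
      _ = φ (τ u + τ v) p := by rw [hcomm, ← hτ u, add_comm, hφ.map_add]
  obtain ⟨c, hc⟩ := AddCircle.exists_eq_coe_mul_of_continuous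
    (AddMonoidHom.mk' (fun u => (τ u : AddCircle T)) hτ_add) hτ_cont
  refine ⟨c, fun u => ?_⟩
  rw [← hτ u]
  simpa only [AddMonoidHom.mk'_apply, hper.lift_coe] using congrArg hper.lift (hc u)

namespace HasSpeedAt

variable {ι : Type*} {l : Filter ι} [l.NeBot] {p : ι → M} {c : ι → ℝ} {x₀ : M}

theorem of_tendsto (hφ : IsFlow φ) (hψ : IsFlow ψ) (h : ∀ i, HasSpeedAt φ ψ (c i) (p i))
    (hp : Tendsto p l (𝓝 x₀)) {c₀ : ℝ} (hc : Tendsto c l (𝓝 c₀)) : HasSpeedAt φ ψ c₀ x₀ :=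
  fun u => tendsto_nhds_unique (((hψ.continuous_apply u).tendsto x₀).comp hp)
    (((hφ.1.tendsto (c₀ * u, x₀)).comp ((hc.mul_const u).prodMk_nhds hp)).congr
      fun i => (h i u).symm)

/-- `φ a (p i) = ψ (a / c i) (p i)`, and the times `a / c i` tend to `0`. -/
theorem isEquilibrium_of_tendsto_abs (hφ : IsFlow φ) (hψ : IsFlow ψ)
    (h : ∀ i, HasSpeedAt φ ψ (c i) (p i)) (hp : Tendsto p l (𝓝 x₀))
    (hc : Tendsto (fun i => |c i|) l atTop) : IsEquilibrium φ x₀ := by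
  intro a
  have htime : Tendsto (fun i => a / c i) l (𝓝 0) := by
    rw [tendsto_zero_iff_abs_tendsto_zero]
    simpa only [Function.comp_def, abs_div] using (tendsto_const_nhds (x := |a|)).div_atTop hc
  have hψ_lim : Tendsto (fun i => ψ (a / c i) (p i)) l (𝓝 x₀) := by
    simpa only [Function.comp_def, hψ.map_zero_apply] using
      (hψ.1.tendsto (0, x₀)).comp (htime.prodMk_nhds hp)
  refine tendsto_nhds_unique ((((hφ.continuous_apply a).tendsto x₀).comp hp).congr' ?_) hψ_lim
  filter_upwards [hc.eventually_gt_atTop 0] with i hi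
  rw [Function.comp_apply, h i, mul_div_cancel₀ a (abs_pos.1 hi)]

end HasSpeedAt

theorem exists_hasSpeedAt_of_not_isEquilibrium (hφ : IsFlow φ) (hψ : IsFlow ψ)
    (hcomm : FlowsCommute φ ψ) (h2 : Dense {p : M | IsPeriodicPoint φ p})
    (h4 : FinitelyManyShortPeriodicOrbits φ) {x₀ : M} (hx₀ : ¬ IsEquilibrium φ x₀) :
    ∃ c, HasSpeedAt φ ψ c x₀ := by
  obtain ⟨p, hp_per, hp_lim⟩ := mem_closure_iff_seq_limit.1 (h2 x₀)
  choose c hc using fun n =>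
    hcomm.exists_hasSpeedAt hφ hψ (hp_per n) (hcomm.apply_mem_flowOrbit hφ hψ h4 (hp_per n))
  have hc_bdd : ∃ C, ∃ᶠ n in atTop, c n ∈ ball 0 C := by
    have := mt (HasSpeedAt.isEquilibrium_of_tendsto_abs hφ hψ hc hp_lim) hx₀
    simpa only [Filter.tendsto_atTop, not_forall, Filter.not_eventually, not_le, mem_ball,
      dist_zero_right, Real.norm_eq_abs] using this
  obtain ⟨C, hC⟩ := hc_bdd
  obtain ⟨c₀, -, σ, hσ, hc_lim⟩ := tendsto_subseq_of_frequently_bounded isBounded_ball hC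
  exact ⟨c₀, .of_tendsto hφ hψ (fun n => hc (σ n)) (hp_lim.comp hσ.tendsto_atTop) hc_lim⟩

theorem HasSpeedAt.eq_of_dense (hφ : IsFlow φ) (hψ : IsFlow ψ) (hcomm : FlowsCommute φ ψ)
    {c : ℝ} {x₀ : M} (h : HasSpeedAt φ ψ c x₀) (hd : Dense (flowOrbit φ x₀)) (u : ℝ) :
    ψ u = φ (c * u) := by
  refine Continuous.ext_on hd (hψ.continuous_apply u) (hφ.continuous_apply _) ?_
  rintro _ ⟨t, rfl⟩
  rw [hcomm, h u, ← hφ.map_add, add_comm, hφ.map_add]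

theorem IsEquilibrium.subsingleton_of_dense {x₀ : M} (hE : IsEquilibrium φ x₀)
    (hd : Dense (flowOrbit φ x₀)) : Subsingleton M := by
  have hx₀ : flowOrbit φ x₀ = {x₀} := by
    rw [flowOrbit, show (fun t => φ t x₀) = fun _ => x₀ from funext hE, range_const]
  refine ⟨fun x y => ?_⟩
  have hx := hd x
  have hy := hd y
  rw [hx₀, closure_singleton] at hx hy
  rw [hx, hy]

end CommutingFlow

theorem commuting_flow_preserves_orbits_general
    (φ : ℝ → M → M) (hφ : IsFlow φ)
    (h2 : Dense {p : M | IsPeriodicPoint φ p})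
    (h3 : IsTransitiveFlow φ)
    (h4 : FinitelyManyShortPeriodicOrbits φ)
    (ψ : ℝ → M → M) (hψ : IsFlow ψ) (hcomm : FlowsCommute φ ψ) :
    ∀ (x : M) (s : ℝ), ψ s x ∈ flowOrbit φ x := by
  intro x s
  obtain ⟨x₀, hx₀⟩ := h3
  have hd : Dense (flowOrbit φ x₀) := hx₀.mono <| by rintro _ ⟨t, -, rfl⟩; exact ⟨t, rfl⟩
  by_cases hE : IsEquilibrium φ x₀
  · have := hE.subsingleton_of_dense hd
    exact ⟨0, Subsingleton.elim _ _⟩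
  · obtain ⟨c, hc⟩ := exists_hasSpeedAt_of_not_isEquilibrium hφ hψ hcomm h2 h4 hE
    exact ⟨c * s, congrFun (hc.eq_of_dense hφ hψ hcomm hd s).symm x⟩

/-- Under the hypotheses of Theorem B, every continuous flow `(Y_s)_s` commuting with
`(X_t)_t` preserves each orbit of `(X_t)_t`: `Y_s(x)` lies on the `(X_t)_t`-orbit of `x`. -/
theorem commuting_flow_preserves_orbits
    [CompactSpace M] [ConnectedSpace M]
    (φ : ℝ → M → M) (hφ : IsFlow φ)
    (h1 : {p : M | IsEquilibrium φ p}.Finite)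
    (h2 : Dense {p : M | IsPeriodicPoint φ p})
    (h3 : IsTransitiveFlow φ)
    (h4 : FinitelyManyShortPeriodicOrbits φ)
    (ψ : ℝ → M → M) (hψ : IsFlow ψ) (hcomm : FlowsCommute φ ψ) :
    ∀ (x : M) (s : ℝ), ψ s x ∈ flowOrbit φ x :=
  commuting_flow_preserves_orbits_general φ hφ h2 h3 h4 ψ hψ hcomm
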